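/- Let L ⊆ ℝ^d be a linear subspace of dimension k−1 and let a₁,…,a_k be a positive basis of L. Let L^⊥ be the orthogonal complement and π the orthogonal projection onto L^⊥. If x_{k+1},…,x_m ∈ ℝ^d satisfy pos {π(x_{k+1}),…,π(x_m)} = L^⊥, then pos {a₁,…,a_k, x_{k+1},…,x_m} = ℝ^d. -/

import Mathlib

open scoped BigOperators

/-- The positive (conic) hull of a set: all finite nonnegative linear combinations. -/
def posHull {d : ℕ} (A : Set (EuclideanSpace ℝ (Fin d))) : Set (EuclideanSpace ℝ (Fin d)) :=
  {x | ∃ (n : ℕ) (c : Fin n → ℝ) (f : Fin n → EuclideanSpace ℝ (Fin d)),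
    (∀ i, 0 ≤ c i) ∧ (∀ i, f i ∈ A) ∧ x = ∑ i, c i • f i}

/-!
Given `v`, the projections `π(x_j)` positively span `L^⊥ ∋ π(v)`, so some conic
combination `w` of the `x_j` has `π(w) = π(v)`. Then `v - w ∈ ker π = L`, which the `a_i`
positively span, and `v = (v - w) + w`.
-/

open PointedCone

theorem posHull_eq_hull {d : ℕ} (A : Set (EuclideanSpace ℝ (Fin d))) :
    posHull A = hull ℝ A := by
  ext x
  rw [SetLike.mem_coe, Submodule.mem_span_set']
  constructor
  · rintro ⟨n, c, f, hc, hf, rfl⟩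
    exact ⟨n, fun i => ⟨c i, hc i⟩, fun i => ⟨f i, hf i⟩, rfl⟩
  · rintro ⟨n, c, g, rfl⟩
    exact ⟨n, fun i => c i, fun i => g i, fun i => (c i).2, fun i => (g i).2, rfl⟩

section

variable {E : Type*} [NormedAddCommGroup E] [InnerProductSpace ℝ E]

theorem exists_mem_hull_sub_mem_orthogonal_of_starProjection_mem_hull (K : Submodule ℝ E)
    [K.HasOrthogonalProjection] {s : Set E} {v : E}
    (hv : K.starProjection v ∈ hull ℝ (K.starProjection '' s)) :
    ∃ w ∈ hull ℝ s, v - w ∈ Kᗮ := by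
  have : K.starProjection v ∈ (hull ℝ s).map (K.starProjection : E →ₗ[ℝ] E) := by
    rwa [PointedCone.map, Submodule.map_span]
  obtain ⟨w, hw, hπ⟩ := mem_map.mp this
  rw [ContinuousLinearMap.coe_coe] at hπ
  refine ⟨w, hw, K.starProjection_apply_eq_zero_iff.mp ?_⟩
  rw [map_sub, hπ, sub_self]

theorem hull_union_eq_top_of_forall_exists_sub_mem {L : Submodule ℝ E} {s t : Set E}
    (hs : (L : Set E) ⊆ hull ℝ s) (ht : ∀ v, ∃ w ∈ hull ℝ t, v - w ∈ L) :
    hull ℝ (s ∪ t) = ⊤ := by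
  refine Submodule.eq_top_iff'.mpr fun v => ?_
  obtain ⟨w, hw, hvw⟩ := ht v
  rw [hull, Submodule.span_union]
  exact Submodule.mem_sup.mpr ⟨v - w, hs hvw, w, hw, sub_add_cancel v w⟩

end

theorem splitting_lemma_general (d k m : ℕ) (L : Submodule ℝ (EuclideanSpace ℝ (Fin d)))
    (a : Fin k → EuclideanSpace ℝ (Fin d))
    (ha : posHull (Set.range a) = (L : Set (EuclideanSpace ℝ (Fin d))))
    (x : Fin m → EuclideanSpace ℝ (Fin d))
    (hx : posHull (Set.range fun j => ((Submodule.orthogonalProjectionOnto Lᗮ (x j) : Lᗮ) :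
            EuclideanSpace ℝ (Fin d)))
          = (Lᗮ : Set (EuclideanSpace ℝ (Fin d)))) :
    posHull (Set.range a ∪ Set.range x) = Set.univ := by
  have hx' : (hull ℝ (Lᗮ.starProjection '' Set.range x) : Set (EuclideanSpace ℝ (Fin d))) =
      Lᗮ := by
    rw [← Set.range_comp, ← posHull_eq_hull, ← hx]
    rfl
  rw [posHull_eq_hull] at ha ⊢
  refine congrArg SetLike.coe (hull_union_eq_top_of_forall_exists_sub_mem ha.ge fun v => ?_)
  have hv : Lᗮ.starProjection v ∈ hull ℝ (Lᗮ.starProjection '' Set.range x) :=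
    hx'.ge (Lᗮ.starProjection_apply_mem v)
  simpa [Submodule.orthogonal_orthogonal] using
    exists_mem_hull_sub_mem_orthogonal_of_starProjection_mem_hull Lᗮ hv

theorem splitting_lemma (d k m : ℕ) (L : Submodule ℝ (EuclideanSpace ℝ (Fin d)))
    (hL : Module.finrank ℝ L = k - 1)
    (a : Fin k → EuclideanSpace ℝ (Fin d))
    (ha : posHull (Set.range a) = (L : Set (EuclideanSpace ℝ (Fin d))))
    (ha' : ∀ b ∈ Set.range a,
      posHull (Set.range a \ {b}) ≠ (L : Set (EuclideanSpace ℝ (Fin d))))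
    (x : Fin m → EuclideanSpace ℝ (Fin d))
    (hx : posHull (Set.range fun j => ((Submodule.orthogonalProjectionOnto Lᗮ (x j) : Lᗮ) :
            EuclideanSpace ℝ (Fin d)))
          = (Lᗮ : Set (EuclideanSpace ℝ (Fin d)))) :
    posHull (Set.range a ∪ Set.range x) = Set.univ :=
  splitting_lemma_general d k m L a ha x hx
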